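/- For every n ≥ 1 there exists a constant θ(n) > 0 such that for all symmetric n×n matrices ξ, η: θ(n) · (1+|ξ|²+|η|²)^{(n−1)/2} ≤ ∫₀¹ (1+|ξ+tη|²)^{(n−1)/2} dt. -/

import Mathlib

/-!
By the reverse triangle inequality `‖ξ + tη‖ ≥ |‖ξ‖ - t‖η‖|`, the segment `t ↦ ξ + tη` stays at
distance `≳ |ξ| + |η|` from the origin for `t ∈ [0, 1/4]` when `|η| ≤ 2|ξ|`, and for `t ∈ [3/4, 1]`
otherwise. On that quarter interval the integrand is at least `((1 + |ξ|² + |η|²) / 20)^p`, and the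
rest of the integral is nonnegative.
-/

noncomputable def frobNorm {n : ℕ} (A : Matrix (Fin n) (Fin n) ℝ) : ℝ :=
  Real.sqrt (∑ i, ∑ j, (A i j) ^ 2)

open Set MeasureTheory

attribute [local instance] Matrix.frobeniusNormedAddCommGroup Matrix.frobeniusNormedSpace

lemma frobNorm_eq_norm {n : ℕ} (A : Matrix (Fin n) (Fin n) ℝ) : frobNorm A = ‖A‖ := by
  rw [Matrix.frobenius_norm_def, frobNorm, Real.sqrt_eq_rpow]
  simp [Real.norm_eq_abs, sq_abs]

lemma mul_le_intervalIntegral_of_le_on {f : ℝ → ℝ} {a b c d m : ℝ}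
    (hf : IntervalIntegrable f volume a b) (hac : a ≤ c) (hcd : c ≤ d) (hdb : d ≤ b)
    (hf0 : ∀ t ∈ Icc a b, 0 ≤ f t) (hm : ∀ t ∈ Icc c d, m ≤ f t) :
    (d - c) * m ≤ ∫ t in a..b, f t := by
  have hsub : ∀ u v, a ≤ u → u ≤ v → v ≤ b → IntervalIntegrable f volume u v :=
    fun u v hu huv hv => hf.mono_set <| by
      rw [uIcc_of_le huv, uIcc_of_le (hu.trans (huv.trans hv))]
      exact Icc_subset_Icc hu hv
  have hnonneg : ∀ u v, a ≤ u → u ≤ v → v ≤ b → 0 ≤ ∫ t in u..v, f t := fun u v hu huv hv =>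
    intervalIntegral.integral_nonneg huv fun t ht => hf0 t ⟨hu.trans ht.1, ht.2.trans hv⟩
  have hmid : (d - c) * m ≤ ∫ t in c..d, f t := by
    simpa [intervalIntegral.integral_const] using
      intervalIntegral.integral_mono_on hcd intervalIntegrable_const
        (hsub c d hac hcd hdb) hm
  rw [← intervalIntegral.integral_add_adjacent_intervals (hsub a c le_rfl hac (hcd.trans hdb))
      (hsub c b hac (hcd.trans hdb) le_rfl),
    ← intervalIntegral.integral_add_adjacent_intervals (hsub c d hac hcd hdb)
      (hsub d b (hac.trans hcd) hdb le_rfl)]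
  linarith [hnonneg a c le_rfl hac (hcd.trans hdb), hnonneg d b (hac.trans hcd) hdb le_rfl]

section NormedSpace

variable {E : Type*} [SeminormedAddCommGroup E] [NormedSpace ℝ E]

lemma abs_norm_sub_mul_norm_le_norm_add_smul (ξ η : E) {t : ℝ} (ht : 0 ≤ t) :
    |‖ξ‖ - t * ‖η‖| ≤ ‖ξ + t • η‖ := by
  simpa [norm_smul, abs_of_nonneg ht] using abs_norm_sub_norm_le ξ (-(t • η))

lemma exists_Icc_sq_norm_le_sq_norm_add_smul (ξ η : E) :
    ∃ a ∈ Icc (0 : ℝ) (3 / 4),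
      ∀ t ∈ Icc a (a + 1 / 4), ‖ξ‖ ^ 2 + ‖η‖ ^ 2 ≤ 20 * ‖ξ + t • η‖ ^ 2 := by
  have hξ := norm_nonneg ξ
  have hη := norm_nonneg η
  by_cases hsmall : ‖η‖ ≤ 2 * ‖ξ‖
  · refine ⟨0, by norm_num, fun t ht => ?_⟩
    have hz := (le_abs_self _).trans (abs_norm_sub_mul_norm_le_norm_add_smul ξ η ht.1)
    have hx : ‖ξ‖ / 2 ≤ ‖ξ + t • η‖ := by nlinarith [ht.2]
    nlinarith
  · refine ⟨3 / 4, by norm_num, fun t ht => ?_⟩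
    have hz := (neg_le_abs _).trans
      (abs_norm_sub_mul_norm_le_norm_add_smul ξ η (by linarith [ht.1] : (0 : ℝ) ≤ t))
    have hy : ‖η‖ / 4 ≤ ‖ξ + t • η‖ := by nlinarith [ht.1]
    nlinarith

theorem mul_rpow_le_intervalIntegral_rpow_norm_add_smul {p : ℝ} (hp : 0 ≤ p) (ξ η : E) :
    1 / 4 * (1 / 20) ^ p * (1 + ‖ξ‖ ^ 2 + ‖η‖ ^ 2) ^ p ≤
      ∫ t in (0 : ℝ)..1, (1 + ‖ξ + t • η‖ ^ 2) ^ p := by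
  obtain ⟨a, ha, hgood⟩ := exists_Icc_sq_norm_le_sq_norm_add_smul ξ η
  have hcont : Continuous fun t : ℝ => (1 + ‖ξ + t • η‖ ^ 2) ^ p :=
    Continuous.rpow_const (by fun_prop) fun _ => Or.inr hp
  have hbound : ∀ t ∈ Icc a (a + 1 / 4),
      (1 / 20 * (1 + ‖ξ‖ ^ 2 + ‖η‖ ^ 2)) ^ p ≤ (1 + ‖ξ + t • η‖ ^ 2) ^ p := fun t ht =>
    Real.rpow_le_rpow (by positivity) (by linarith [hgood t ht]) hp
  calc 1 / 4 * (1 / 20) ^ p * (1 + ‖ξ‖ ^ 2 + ‖η‖ ^ 2) ^ p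
      = (a + 1 / 4 - a) * (1 / 20 * (1 + ‖ξ‖ ^ 2 + ‖η‖ ^ 2)) ^ p := by
        rw [Real.mul_rpow (by norm_num) (by positivity)]; ring
    _ ≤ _ := mul_le_intervalIntegral_of_le_on (hcont.intervalIntegrable 0 1) ha.1
        (by linarith) (by linarith [ha.2]) (fun t _ => by positivity) hbound

end NormedSpace

/-- Campanato's lemma. For every `n ≥ 1` there is a constant `θ(n) > 0` such
that for all symmetric `n × n` matrices `ξ, η`:
`θ(n) (1+|ξ|²+|η|²)^{(n−1)/2} ≤ ∫₀¹ (1+|ξ+tη|²)^{(n−1)/2} dt`. -/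
theorem campanato_lower_bound (n : ℕ) (hn : 1 ≤ n) :
    ∃ θ : ℝ, 0 < θ ∧
      ∀ ξ η : Matrix (Fin n) (Fin n) ℝ, ξ.IsSymm → η.IsSymm →
        θ * (1 + frobNorm ξ ^ 2 + frobNorm η ^ 2) ^ (((n : ℝ) - 1) / 2) ≤
          ∫ t in (0 : ℝ)..1, (1 + frobNorm (ξ + t • η) ^ 2) ^ (((n : ℝ) - 1) / 2) := by
  have hp : 0 ≤ ((n : ℝ) - 1) / 2 := by
    have : (1 : ℝ) ≤ n := by exact_mod_cast hn
    linarith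
  refine ⟨1 / 4 * (1 / 20) ^ (((n : ℝ) - 1) / 2), by positivity, fun ξ η _ _ => ?_⟩
  simpa only [frobNorm_eq_norm] using mul_rpow_le_intervalIntegral_rpow_norm_add_smul hp ξ η
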